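/- Let (T, [·,·,·], α) be a regular Hom-Lie triple system over a commutative ring k with Char(k) ≠ 2, and let U(T) = ⟨T,T⟩ ⊕ T be the ℤ₂-graded Lie algebra with bracket [X + a, Y + b] = ([X,Y] + ⟨a,b⟩) + (μ^{α⁻¹}(X)(b) − μ^{α⁻¹}(Y)(a)) and graded automorphism α_U extending α. Then the canonical inclusion ι_T : T → U(T) is a universal imbedding: (1) ι_T ∘ α = α_U ∘ ι_T and ι_T([a,b,c]) = α_U([[ι_T(a),ι_T(b)],ι_T(c)]) for all a,b,c ∈ T; and (2) for every Lie algebra L with Lie algebra automorphism α_L and every imbedding ε : T → L (i.e. ε ∘ α = α_L ∘ ε and ε([a,b,c]) = α_L([[ε(a),ε(b)]_L,ε(c)]_L)), there exists a unique Lie algebra homomorphism φ : U(T) → L such that φ ∘ ι_T = ε and φ ∘ α_U = α_L ∘ φ. -/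

import Mathlib

open TensorProduct

/-- The relations defining the exterior square: the span of the squares `a ⊗ a`. -/
def sqRel (k T : Type*) [CommRing k] [AddCommGroup T] [Module k T] :
    Submodule k (T ⊗[k] T) :=
  Submodule.span k {x | ∃ a : T, x = a ⊗ₜ[k] a}

/-- The exterior square `T ∧ T` of the `k`-module `T`. -/
abbrev Wedge (k T : Type*) [CommRing k] [AddCommGroup T] [Module k T] :=
  (T ⊗[k] T) ⧸ sqRel k T

/-- The wedge `a ∧ b ∈ T ∧ T`. -/
noncomputable def wedge {k T : Type*} [CommRing k] [AddCommGroup T] [Module k T]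
    (a b : T) : Wedge k T :=
  Submodule.Quotient.mk (a ⊗ₜ[k] b)

/-- The action `D · (x ∧ y) = D^{α⁻¹}(x) ∧ y + x ∧ D^{α⁻¹}(y)` of `End(T)` on `T ∧ T`. -/
noncomputable def act {k T : Type*} [CommRing k] [AddCommGroup T] [Module k T]
    (α : T ≃ₗ[k] T) (D : Module.End k T) (x y : T) : Wedge k T :=
  wedge (α.symm (D x)) y + wedge x (α.symm (D y))

/-- The submodule `A(T∧T)` spanned by `D_{a,b}·(a∧b)` and `D_{a,b}·(c∧d) + D_{c,d}·(a∧b)`. -/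
def ATT {k T : Type*} [CommRing k] [AddCommGroup T] [Module k T]
    (t : T →ₗ[k] T →ₗ[k] T →ₗ[k] T) (α : T ≃ₗ[k] T) : Submodule k (Wedge k T) :=
  Submodule.span k
    ({z | ∃ a b : T, z = act α (t a b) a b} ∪
      {z | ∃ a b c d : T, z = act α (t a b) c d + act α (t c d) a b})

/-- The quotient `⟨T,T⟩ = (T∧T)/A(T∧T)`. -/
abbrev QTT {k T : Type*} [CommRing k] [AddCommGroup T] [Module k T]
    (t : T →ₗ[k] T →ₗ[k] T →ₗ[k] T) (α : T ≃ₗ[k] T) :=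
  Wedge k T ⧸ ATT t α

/-- The coset `⟨a,b⟩ ∈ ⟨T,T⟩` of `a ∧ b`. -/
noncomputable def cls {k T : Type*} [CommRing k] [AddCommGroup T] [Module k T]
    (t : T →ₗ[k] T →ₗ[k] T →ₗ[k] T) (α : T ≃ₗ[k] T) (a b : T) : QTT t α :=
  Submodule.Quotient.mk (wedge a b)

/-- The bracket of `U(T) = ⟨T,T⟩ ⊕ T`:
`[X + a, Y + b] = ([X,Y] + ⟨a,b⟩) + (μ^{α⁻¹}(X)(b) − μ^{α⁻¹}(Y)(a))`. -/
noncomputable def ubr {k T : Type*} [CommRing k] [AddCommGroup T] [Module k T]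
    (t : T →ₗ[k] T →ₗ[k] T →ₗ[k] T) (α : T ≃ₗ[k] T)
    (br : QTT t α →ₗ[k] QTT t α →ₗ[k] QTT t α)
    (μ : QTT t α →ₗ[k] Module.End k T)
    (u v : QTT t α × T) : QTT t α × T :=
  (br u.1 v.1 + cls t α u.2 v.2, α.symm (μ u.1 v.2) - α.symm (μ v.1 u.2))

/-- Induction principle for `⟨T,T⟩`: it is generated by the cosets `⟨a,b⟩`. -/
lemma cls_induction {k T : Type*} [CommRing k] [AddCommGroup T] [Module k T]
    (t : T →ₗ[k] T →ₗ[k] T →ₗ[k] T) (α : T ≃ₗ[k] T)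
    {p : QTT t α → Prop}
    (hc : ∀ a b : T, p (cls t α a b)) (h0 : p 0)
    (hadd : ∀ x y, p x → p y → p (x + y)) (x : QTT t α) : p x := by
  obtain ⟨y, rfl⟩ := Submodule.Quotient.mk_surjective _ x
  obtain ⟨z, rfl⟩ := Submodule.Quotient.mk_surjective _ y
  induction z using TensorProduct.induction_on with
  | zero => simpa using h0
  | tmul a b => exact hc a b
  | add x y hx hy =>
      rw [Submodule.Quotient.mk_add, Submodule.Quotient.mk_add]
      exact hadd _ _ hx hy

lemma cls_zero_left {k T : Type*} [CommRing k] [AddCommGroup T] [Module k T]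
    (t : T →ₗ[k] T →ₗ[k] T →ₗ[k] T) (α : T ≃ₗ[k] T) (b : T) :
    cls t α 0 b = 0 := by
  simp [cls, wedge, TensorProduct.zero_tmul]

/-- For every regular Hom-Lie triple system `(T, [·,·,·], α)` over a
commutative ring `k` with Char(k) ≠ 2, the canonical inclusion `ι_T : T → U(T)` into the
ℤ₂-graded Lie algebra `U(T) = ⟨T,T⟩ ⊕ T` (with graded automorphism `α_U` extending `α`) is
a universal imbedding: `ι_T ∘ α = α_U ∘ ι_T`, `ι_T[a,b,c] = α_U[[ι_T a, ι_T b], ι_T c]`,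
and every imbedding `ε : T → L` into a Lie algebra `L` with automorphism `α_L` factors as
`ε = φ ∘ ι_T` for a unique Lie algebra homomorphism `φ : U(T) → L` with
`φ ∘ α_U = α_L ∘ φ`. -/
theorem stmt16 {k T : Type*} [CommRing k] [Invertible (2 : k)]
    [AddCommGroup T] [Module k T]
    (t : T →ₗ[k] T →ₗ[k] T →ₗ[k] T) (α : T ≃ₗ[k] T)
    (h1 : ∀ a b : T, t a a b = 0)
    (h2 : ∀ a b c : T, t a b c + t b c a + t c a b = 0)
    (h3 : ∀ a b c d e : T, t (α a) (α b) (t c d e) =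
      t (t a b c) (α d) (α e) + t (α c) (t a b d) (α e) + t (α c) (α d) (t a b e))
    (h4 : ∀ a b c : T, α (t a b c) = t (α a) (α b) (α c))
    (br : QTT t α →ₗ[k] QTT t α →ₗ[k] QTT t α)
    (hbr : ∀ a b c d : T, br (cls t α a b) (cls t α c d)
      = cls t α (α.symm (t a b c)) d + cls t α c (α.symm (t a b d)))
    (μ : QTT t α →ₗ[k] Module.End k T)
    (hμ : ∀ a b : T, μ (cls t α a b) = t a b)
    -- the graded automorphism `α_U` of `U(T)`, `α_U(X + a) = β(X) + α(a)`:
    (β : QTT t α ≃ₗ[k] QTT t α)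
    (hβ : ∀ a b : T, β (cls t α a b) = cls t α (α a) (α b)) :
    -- (1) the canonical inclusion ι_T(a) = (0, a) is an imbedding
    (∀ a : T, (((0 : QTT t α), α a) : QTT t α × T)
      = (β (0 : QTT t α), α a)) ∧
    (∀ a b c : T,
      (((0 : QTT t α), t a b c) : QTT t α × T) =
        (β ((ubr t α br μ (ubr t α br μ ((0 : QTT t α), a) ((0 : QTT t α), b))
              ((0 : QTT t α), c)).1),
         α ((ubr t α br μ (ubr t α br μ ((0 : QTT t α), a) ((0 : QTT t α), b))
              ((0 : QTT t α), c)).2))) ∧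
    -- (2) universality
    (∀ (L : Type*) [LieRing L] [LieAlgebra k L] (αL : L ≃ₗ[k] L),
      (∀ x y : L, αL ⁅x, y⁆ = ⁅αL x, αL y⁆) →
      ∀ ε : T →ₗ[k] L, (∀ a : T, ε (α a) = αL (ε a)) →
      (∀ a b c : T, ε (t a b c) = αL ⁅⁅ε a, ε b⁆, ε c⁆) →
      ∃! φ : QTT t α × T →ₗ[k] L,
        (∀ u v : QTT t α × T, φ (ubr t α br μ u v) = ⁅φ u, φ v⁆) ∧
        (∀ a : T, φ ((0 : QTT t α), a) = ε a) ∧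
        (∀ u : QTT t α × T, φ (β u.1, α u.2) = αL (φ u))) := by
  have hub1 : ∀ a b : T, ubr t α br μ ((0 : QTT t α), a) ((0 : QTT t α), b)
      = (cls t α a b, 0) := by
    intro a b
    simp [ubr]
  refine ⟨fun a => by simp, ?_, ?_⟩
  · intro a b c
    rw [hub1]
    have hub2 : ubr t α br μ (cls t α a b, (0 : T)) ((0 : QTT t α), c)
        = (0, α.symm (t a b c)) := by
      simp [ubr, cls_zero_left, hμ]
    rw [hub2]
    simp
  · intro L _ _ αL hαL ε hε hεt
    -- `ε` intertwines `α.symm` and `αL.symm`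
    have eps_symm : ∀ x : T, ε (α.symm x) = αL.symm (ε x) := by
      intro x
      have h := hε (α.symm x)
      rw [LinearEquiv.apply_symm_apply] at h
      exact ((LinearEquiv.symm_apply_eq αL).mpr h).symm
    have eps_t : ∀ a b c : T, ε (α.symm (t a b c)) = ⁅⁅ε a, ε b⁆, ε c⁆ := by
      intro a b c
      rw [eps_symm, hεt, LinearEquiv.symm_apply_apply]
    -- construct the map `w` on the exterior square
    obtain ⟨w, hw⟩ : ∃ w : Wedge k T →ₗ[k] L, ∀ a b : T, w (wedge a b) = ⁅ε a, ε b⁆ := by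
      refine ⟨Submodule.liftQ _ (TensorProduct.lift
        (LinearMap.mk₂ k (fun a b => ⁅ε a, ε b⁆)
          (by intros; simp [add_lie]) (by intros; simp [smul_lie])
          (by intros; simp [lie_add]) (by intros; simp [lie_smul]))) ?_, ?_⟩
      · refine Submodule.span_le.mpr ?_
        rintro x ⟨a, rfl⟩
        simp [LinearMap.mem_ker]
      · intro a b
        refine (Submodule.liftQ_apply _ _ _).trans ?_
        simp
    have hwact : ∀ a b c d : T, w (act α (t a b) c d) = ⁅⁅ε a, ε b⁆, ⁅ε c, ε d⁆⁆ := by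
      intro a b c d
      rw [act, map_add, hw, hw, eps_t, eps_t, ← leibniz_lie]
    -- construct the map `f` on `⟨T,T⟩`
    obtain ⟨f, hf⟩ : ∃ f : QTT t α →ₗ[k] L, ∀ a b : T, f (cls t α a b) = ⁅ε a, ε b⁆ := by
      refine ⟨Submodule.liftQ _ w ?_, ?_⟩
      · refine Submodule.span_le.mpr ?_
        rintro z (⟨a, b, rfl⟩ | ⟨a, b, c, d, rfl⟩)
        · simp [LinearMap.mem_ker, hwact]
        · simp only [SetLike.mem_coe, LinearMap.mem_ker, map_add, hwact]
          rw [← lie_skew]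
          exact neg_add_cancel _
      · intro a b
        exact (Submodule.liftQ_apply _ _ _).trans (hw a b)
    -- the three key identities for `f`
    have L1 : ∀ X Y : QTT t α, f (br X Y) = ⁅f X, f Y⁆ := by
      intro X
      refine cls_induction (p := fun X => ∀ Y, f (br X Y) = ⁅f X, f Y⁆) t α ?_ ?_ ?_ X
      · intro a b
        refine cls_induction t α ?_ ?_ ?_
        · intro c d
          rw [hbr, map_add, hf, hf, hf, hf, eps_t, eps_t, ← leibniz_lie]
        · simp
        · intro x y hx hy
          simp [map_add, hx, hy, lie_add]
      · intro Y; simp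
      · intro x y hx hy Y
        simp [map_add, LinearMap.add_apply, hx, hy, add_lie]
    have L2 : ∀ (X : QTT t α) (a : T), ε (α.symm (μ X a)) = ⁅f X, ε a⁆ := by
      intro X
      refine cls_induction (p := fun X => ∀ a, ε (α.symm (μ X a)) = ⁅f X, ε a⁆)
        t α ?_ ?_ ?_ X
      · intro a b c
        rw [hμ, eps_t, hf]
      · intro a; simp
      · intro x y hx hy a
        simp [map_add, LinearMap.add_apply, hx, hy, add_lie]
    have L3 : ∀ X : QTT t α, f (β X) = αL (f X) := by
      refine cls_induction t α ?_ ?_ ?_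
      · intro a b
        rw [hβ, hf, hf, hε, hε, hαL]
      · simp
      · intro x y hx hy
        simp [map_add, hx, hy]
    -- the universal morphism
    refine ⟨f.comp (LinearMap.fst k _ _) + ε.comp (LinearMap.snd k _ _), ⟨?_, ?_, ?_⟩, ?_⟩
    · intro u v
      simp only [LinearMap.add_apply, LinearMap.coe_comp, Function.comp_apply,
        LinearMap.fst_apply, LinearMap.snd_apply, ubr, map_add, map_sub, L1, L2, hf]
      simp only [lie_add, add_lie]
      rw [← lie_skew (x := ε u.2) (y := f v.1)]
      abel
    · intro a
      simp
    · intro u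
      simp only [LinearMap.add_apply, LinearMap.coe_comp, Function.comp_apply,
        LinearMap.fst_apply, LinearMap.snd_apply, L3, hε, map_add]
    · intro ψ ⟨hψ1, hψ2, _⟩
      have key : ∀ X : QTT t α, ψ (X, (0 : T)) = f X := by
        refine cls_induction t α ?_ ?_ ?_
        · intro a b
          rw [← hub1 a b, hψ1, hψ2, hψ2, hf]
        · rw [map_zero]; exact map_zero ψ
        
        · intro x y hx hy
          have h : ((x + y : QTT t α), (0 : T)) = (x, (0 : T)) + (y, (0 : T)) := by simp
          rw [h, map_add, hx, hy, map_add]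
      refine LinearMap.ext fun u => ?_
      have h : u = (u.1, (0 : T)) + ((0 : QTT t α), u.2) := by simp
      rw [h, map_add, map_add, key, hψ2]
      simp
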